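/- Let G be a finite group of order n such that every nontrivial complex representation of G has degree at least k (k ≥ 1), and let B ⊆ G be a symmetric subset, i.e., B = B⁻¹. Define the linear operator X on the space ℂ^G of complex-valued functions on G (with the standard Hermitian inner product, so the indicator functions of elements of G form an orthonormal basis) by (Xf)(g) = Σ_{b ∈ B} f(g·b). Then for every v ∈ ℂ^G with Σ_{g ∈ G} v(g) = 0, one has ‖Xv‖² ≤ (n·|B|/k)·‖v‖². -/

import Mathlib

/-!
Mean-zero functions form a subspace `W` stable under left translations and under the
self-adjoint operator `X`, and `X` commutes with left translations. So for each eigenvalue `μ`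
of `X` on `W`, the eigenspace `W ∩ ker (X - μ)` is a subrepresentation of the left-regular
representation; it contains no nonzero invariant vector (those are constant), so it is a
nontrivial representation and has dimension at least `k`. Since `X` is self-adjoint, summing
`‖X e‖²` over any orthonormal family is bounded by the squared Hilbert–Schmidt norm
`∑_h ‖X δ_h‖² = n |B|`; over an orthonormal basis of that eigenspace this gives
`k |μ|² ≤ n |B|`. The spectral theorem for `X` on `W` then yields the bound.
-/

open Finset Module Module.End
open scoped InnerProductSpace

namespace LinearMap.IsSymmetric

variable {𝕜 E : Type*} [RCLike 𝕜] [NormedAddCommGroup E] [InnerProductSpace 𝕜 E]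
  {T : E →ₗ[𝕜] E}

theorem sum_norm_sq_apply_orthonormal_le {ι κ : Type*} [Fintype ι] [Fintype κ]
    (hT : T.IsSymmetric) (u : OrthonormalBasis ι 𝕜 E) {e : κ → E} (he : Orthonormal 𝕜 e) :
    ∑ i, ‖T (e i)‖ ^ 2 ≤ ∑ j, ‖T (u j)‖ ^ 2 :=
  calc ∑ i, ‖T (e i)‖ ^ 2 = ∑ j, ∑ i, ‖⟪e i, T (u j)⟫_𝕜‖ ^ 2 := by
        rw [sum_comm]
        refine sum_congr rfl fun i _ => ?_
        rw [← u.sum_sq_norm_inner_left]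
        exact sum_congr rfl fun j _ => by rw [hT]
    _ ≤ ∑ j, ‖T (u j)‖ ^ 2 := sum_le_sum fun j _ => he.sum_inner_products_le _

theorem finrank_mul_norm_sq_le [FiniteDimensional 𝕜 E] {ι : Type*} [Fintype ι]
    (hT : T.IsSymmetric) (u : OrthonormalBasis ι 𝕜 E) {S : Submodule 𝕜 E} {μ : 𝕜}
    (hS : S ≤ eigenspace T μ) :
    finrank 𝕜 S * ‖μ‖ ^ 2 ≤ ∑ j, ‖T (u j)‖ ^ 2 := by
  let b := stdOrthonormalBasis 𝕜 S
  have hb : Orthonormal 𝕜 fun i => (b i : E) := b.orthonormal.comp_linearIsometry S.subtypeₗᵢ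
  have hTb : ∀ i, ‖T (b i)‖ ^ 2 = ‖μ‖ ^ 2 := fun i => by
    rw [mem_eigenspace_iff.mp (hS (b i).2), norm_smul, hb.1 i, mul_one]
  calc finrank 𝕜 S * ‖μ‖ ^ 2 = ∑ i, ‖T (b i)‖ ^ 2 := by simp [hTb]
    _ ≤ _ := hT.sum_norm_sq_apply_orthonormal_le u hb

theorem norm_sq_apply_le_of_forall_eigenspace [FiniteDimensional 𝕜 E] {W : Submodule 𝕜 E}
    (hT : T.IsSymmetric) (hW : ∀ x ∈ W, T x ∈ W) {c : ℝ}
    (hc : ∀ μ : 𝕜, W ⊓ eigenspace T μ ≠ ⊥ → ‖μ‖ ^ 2 ≤ c) {x : E} (hx : x ∈ W) : ‖T x‖ ^ 2 ≤ c * ‖x‖ ^ 2 := by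
  have hTW := hT.restrict_invariant hW
  let b := hTW.eigenvectorBasis rfl
  let eig := hTW.eigenvalues rfl
  have heig : ∀ i, eig i ^ 2 ≤ c := fun i => by
    have hbi : (b i : E) ∈ W ⊓ eigenspace T (eig i) :=
      ⟨(b i).2, mem_eigenspace_iff.mpr (congrArg Subtype.val (hTW.apply_eigenvectorBasis rfl i))⟩
    have hne : (b i : E) ≠ 0 := by simpa using b.orthonormal.ne_zero i
    simpa using hc _ ((Submodule.ne_bot_iff _).mpr ⟨_, hbi, hne⟩)
  let y : W := ⟨x, hx⟩
  calc ‖T x‖ ^ 2 = ‖b.repr (T.restrict hW y)‖ ^ 2 := by rw [b.repr.norm_map]; rfl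
    _ = ∑ i, eig i ^ 2 * ‖b.repr y i‖ ^ 2 := by
        simp only [EuclideanSpace.norm_sq_eq, b, eig, hTW.eigenvectorBasis_apply_self_apply,
          norm_mul, mul_pow, RCLike.norm_ofReal, sq_abs]
    _ ≤ ∑ i, c * ‖b.repr y i‖ ^ 2 := by gcongr with i; exact heig i
    _ = c * ‖x‖ ^ 2 := by
        rw [← mul_sum, ← EuclideanSpace.norm_sq_eq, b.repr.norm_map]; rfl

end LinearMap.IsSymmetric

namespace Subrepresentation

variable {k G V : Type*} [CommRing k] [Group G] [AddCommGroup V] [Module k V]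
  {ρ : Representation k G V}

theorem toRepresentation_ne_one {σ : Subrepresentation ρ} (hσ : σ.toSubmodule ≠ ⊥)
    (hinv : Disjoint σ.toSubmodule ρ.invariants) : σ.toRepresentation ≠ 1 := by
  intro h
  obtain ⟨x, hx, hx0⟩ := (Submodule.ne_bot_iff _).mp hσ
  have hfix : x ∈ ρ.invariants := fun g =>
    congrArg Subtype.val (LinearMap.congr_fun (DFunLike.congr_fun h g) (⟨x, hx⟩ : σ.toSubmodule))
  exact hx0 ((Submodule.disjoint_def.mp hinv) x hx hfix)

def eigenspace {T : Module.End k V} (hT : ∀ g, Commute T (ρ g)) (μ : k) :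
    Subrepresentation ρ where
  toSubmodule := T.eigenspace μ
  apply_mem_toSubmodule g := mapsTo_genEigenspace_of_comm (hT g) μ 1

end Subrepresentation

section CayleyAdjacency

variable {𝕜 G : Type*} [RCLike 𝕜]

section SumZero

variable [Fintype G]

variable (𝕜 G) in
def sumZero : Submodule 𝕜 (EuclideanSpace 𝕜 G) where
  carrier := {f | ∑ g, f g = 0}
  add_mem' hf hg := by simp_all [sum_add_distrib]
  zero_mem' := by simp
  smul_mem' c f hf := by simp_all [← mul_sum]

theorem mem_sumZero {f : EuclideanSpace 𝕜 G} : f ∈ sumZero 𝕜 G ↔ ∑ g, f g = 0 := Iff.rfl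

end SumZero

variable [Group G]

variable (𝕜 G) in
def leftTranslation : Representation 𝕜 G (EuclideanSpace 𝕜 G) where
  toFun h :=
    { toFun f := WithLp.toLp 2 fun g => f (h⁻¹ * g)
      map_add' _ _ := rfl
      map_smul' _ _ := rfl }
  map_one' := by ext; simp
  map_mul' _ _ := by ext f g; change f _ = f _; simp [mul_assoc]

@[simp]
theorem leftTranslation_apply (h : G) (f : EuclideanSpace 𝕜 G) (g : G) :
    leftTranslation 𝕜 G h f g = f (h⁻¹ * g) := rfl

def cayleyAdjacency (B : Finset G) : EuclideanSpace 𝕜 G →ₗ[𝕜] EuclideanSpace 𝕜 G where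
  toFun f := WithLp.toLp 2 fun g => ∑ b ∈ B, f (g * b)
  map_add' _ _ := by ext; simp [sum_add_distrib]
  map_smul' _ _ := by ext; simp [mul_sum]

@[simp]
theorem cayleyAdjacency_apply (B : Finset G) (f : EuclideanSpace 𝕜 G) (g : G) :
    cayleyAdjacency B f g = ∑ b ∈ B, f (g * b) := rfl

theorem cayleyAdjacency_comm_leftTranslation (B : Finset G) (h : G) :
    Commute (cayleyAdjacency B) (leftTranslation 𝕜 G h) := by
  ext f g
  simp [Module.End.mul_apply, mul_assoc]

variable [Fintype G]

variable (𝕜 G) in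
def sumZeroSubrepresentation : Subrepresentation (leftTranslation 𝕜 G) where
  toSubmodule := sumZero 𝕜 G
  apply_mem_toSubmodule h f hf := by
    rw [mem_sumZero] at hf ⊢
    simpa [hf] using Equiv.sum_comp (Equiv.mulLeft h⁻¹) (f ·)

theorem disjoint_sumZero_invariants :
    Disjoint (sumZero 𝕜 G) (leftTranslation 𝕜 G).invariants := by
  refine Submodule.disjoint_def.mpr fun f hsum hfix => ?_
  have hconst : ∀ g, f g = f 1 := fun g => by
    simpa using (congrArg (· g) (hfix g)).symm
  rw [mem_sumZero, Fintype.sum_congr _ _ hconst, sum_const, card_univ, nsmul_eq_mul] at hsum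
  ext g
  simpa [hconst g] using hsum

theorem cayleyAdjacency_mem_sumZero (B : Finset G) {f : EuclideanSpace 𝕜 G}
    (hf : f ∈ sumZero 𝕜 G) : cayleyAdjacency B f ∈ sumZero 𝕜 G := by
  rw [mem_sumZero] at hf ⊢
  simp only [cayleyAdjacency_apply]
  rw [sum_comm]
  exact sum_eq_zero fun b _ => hf ▸ Equiv.sum_comp (Equiv.mulRight b) (f ·)

theorem cayleyAdjacency_isSymmetric {B : Finset G} (hB : ∀ b ∈ B, b⁻¹ ∈ B) :
    (cayleyAdjacency (𝕜 := 𝕜) B).IsSymmetric := by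
  intro f u
  simp only [PiLp.inner_apply, cayleyAdjacency_apply, inner_sum, sum_inner]
  rw [sum_comm, sum_comm (s := univ)]
  refine sum_nbij' (·⁻¹) (·⁻¹) hB hB (by simp) (by simp) fun b _ => ?_
  simpa using (Equiv.sum_comp (Equiv.mulRight b⁻¹) fun g => ⟪f (g * b), u g⟫_𝕜).symm

theorem norm_sq_cayleyAdjacency_basisFun [DecidableEq G] (B : Finset G) (h : G) :
    ‖cayleyAdjacency B (EuclideanSpace.basisFun G 𝕜 h)‖ ^ 2 = #B := by
  have hrow : ∀ g, cayleyAdjacency B (EuclideanSpace.basisFun G 𝕜 h) g =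
      if g⁻¹ * h ∈ B then 1 else 0 := fun g => by
    simp [← eq_inv_mul_iff_mul_eq, sum_ite_eq']
  rw [EuclideanSpace.norm_sq_eq, ← Equiv.sum_comp ((Equiv.inv G).trans (Equiv.mulLeft h))]
  simp only [hrow]
  simp [apply_ite]

end CayleyAdjacency

theorem statement19_general {G : Type} [Group G] [Fintype G] (n k : ℕ)
    (hn : Fintype.card G = n) (hk : 1 ≤ k)
    (hrep : ∀ (V : Type) [AddCommGroup V] [Module ℂ V] [FiniteDimensional ℂ V]
      (ρ : Representation ℂ G V), ρ ≠ 1 → k ≤ Module.finrank ℂ V)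
    (B : Finset G) (hB : ∀ b ∈ B, b⁻¹ ∈ B)
    (v : G → ℂ) (hv : ∑ g : G, v g = 0) :
    ∑ g : G, ‖∑ b ∈ B, v (g * b)‖ ^ 2 ≤
      (n : ℝ) * B.card / k * ∑ g : G, ‖v g‖ ^ 2 := by
  classical
  have hX := cayleyAdjacency_isSymmetric (𝕜 := ℂ) hB
  have heig (μ : ℂ) (hμ : sumZero ℂ G ⊓ eigenspace (cayleyAdjacency B) μ ≠ ⊥) :
      ‖μ‖ ^ 2 ≤ n * #B / k := by
    let σ := sumZeroSubrepresentation ℂ G ⊓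
      .eigenspace (cayleyAdjacency_comm_leftTranslation B) μ
    have hdim : k ≤ finrank ℂ σ.toSubmodule := hrep _ σ.toRepresentation <|
      σ.toRepresentation_ne_one hμ (disjoint_sumZero_invariants.mono_left inf_le_left)
    have hHS := hX.finrank_mul_norm_sq_le (EuclideanSpace.basisFun G ℂ) (S := σ.toSubmodule)
      inf_le_right
    simp only [norm_sq_cayleyAdjacency_basisFun, sum_const, card_univ, hn, nsmul_eq_mul] at hHS
    rw [le_div_iff₀ (Nat.cast_pos.mpr hk)]
    calc ‖μ‖ ^ 2 * (k : ℝ) ≤ finrank ℂ σ.toSubmodule * ‖μ‖ ^ 2 := by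
          rw [mul_comm]; gcongr
      _ ≤ n * (#B : ℝ) := hHS
  simpa [EuclideanSpace.norm_sq_eq] using
    hX.norm_sq_apply_le_of_forall_eigenspace (fun _ => cayleyAdjacency_mem_sumZero B) heig
      (x := WithLp.toLp 2 v) hv

/-- **Key spectral estimate in the appendix**: let `G` be a finite group of order `n`
all of whose nontrivial complex representations have degree at least `k`, and let
`B ⊆ G` be symmetric (`B = B⁻¹`). Let `X` be the operator on `ℂ^G` given by
`(Xf)(g) = Σ_{b ∈ B} f(g·b)`. Then for every `v : G → ℂ` with `Σ_g v(g) = 0` one has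
`‖Xv‖² ≤ (n·|B|/k)·‖v‖²`. -/
theorem statement19 {G : Type} [Group G] [Fintype G] [DecidableEq G] (n k : ℕ)
    (hn : Fintype.card G = n) (hk : 1 ≤ k)
    (hrep : ∀ (V : Type) [AddCommGroup V] [Module ℂ V] [FiniteDimensional ℂ V]
      (ρ : Representation ℂ G V), ρ ≠ 1 → k ≤ Module.finrank ℂ V)
    (B : Finset G) (hB : ∀ b ∈ B, b⁻¹ ∈ B)
    (v : G → ℂ) (hv : ∑ g : G, v g = 0) :
    ∑ g : G, ‖∑ b ∈ B, v (g * b)‖ ^ 2 ≤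
      (n : ℝ) * B.card / k * ∑ g : G, ‖v g‖ ^ 2 :=
  statement19_general n k hn hk hrep B hB v hv
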